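/- arXiv:0704.1702 — 3 statements merged into one kernel-verified Lean document; each statement's English description precedes it below -/
import Mathlib

section
/- There is no positive rational number K and pair of baskets (b₁, r₁), (b₂, r₂) with r₁ ≤ r₂, b'₁ = 2 and b'₂ = 1 such that, for B consisting of these two baskets, P_2(K, B) = 1 and P_3(K, B) = 2. -/
/-!
Only `P_2` is needed. Since `l_Q(2) = b(r - b)/(2r) = b'(r - b')/(2r)`, the two baskets contribute
`1 - 2/r₁` and `1/2 - 1/(2r₂)`, so `P_2 = 1` forces `K/2 = 2/r₁ + 1/(2r₂) - 1/2`.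
As `r₁` is coprime to `b'₁ = 2` and `2b'₁ ≤ r₁`, we get `r₂ ≥ r₁ ≥ 5`, whence `K ≤ 0`.
-/

/-- A basket `(b, r)` with `0 < b < r` and `gcd(b, r) = 1`. -/
structure Basket where
  b : ℕ
  r : ℕ
  b_pos : 0 < b
  b_lt_r : b < r
  coprime : Nat.gcd b r = 1

/-- Reid's correction term `l_Q(m)` of a basket `Q` for `m ≥ 2`. -/
def Basket.corr (Q : Basket) (m : ℕ) : ℚ :=
  ∑ j ∈ Finset.Icc 1 (m - 1),
    ((Q.b * j % Q.r : ℕ) : ℚ) * ((Q.r : ℚ) - ((Q.b * j % Q.r : ℕ) : ℚ)) / (2 * (Q.r : ℚ))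

/-- The virtual `m`-th plurigenus `P_m(K, B)` for `m ≥ 2`. -/
def plurigenus (K : ℚ) (B : Multiset Basket) (m : ℕ) : ℚ :=
  (1 / 12 : ℚ) * m * (m - 1) * (2 * m - 1) * K + (B.map (fun Q => Q.corr m)).sum

/-- `b' = b` if `2b ≤ r`, and `b' = r - b` otherwise. -/
def Basket.b' (Q : Basket) : ℕ := if 2 * Q.b ≤ Q.r then Q.b else Q.r - Q.b

/-- The basket `(1, 2)`. -/
def B12 : Basket := ⟨1, 2, by decide, by decide, by decide⟩

namespace Basket

variable (Q : Basket)

theorem two_mul_b'_le_r : 2 * Q.b' ≤ Q.r := by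
  unfold b'
  split_ifs <;> omega

theorem coprime_b'_r : Nat.Coprime Q.b' Q.r := by
  have h := Q.coprime
  unfold b'
  split_ifs
  · exact h
  · rw [Nat.Coprime, Nat.gcd_comm, Nat.gcd_self_sub_right Q.b_lt_r.le, Nat.gcd_comm]
    exact h

theorem b'_mul_sub_b' : (Q.b' : ℚ) * (Q.r - Q.b') = Q.b * (Q.r - Q.b) := by
  have hle := Q.b_lt_r.le
  unfold b'
  split_ifs
  · rfl
  · rw [Nat.cast_sub hle]; ring

theorem corr_two : Q.corr 2 = Q.b' * (Q.r - Q.b') / (2 * Q.r) := by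
  simp only [corr, Nat.reduceSub, Finset.Icc_self, Finset.sum_singleton, mul_one,
    Nat.mod_eq_of_lt Q.b_lt_r, b'_mul_sub_b']

theorem five_le_r_of_b'_eq_two (h : Q.b' = 2) : 5 ≤ Q.r := by
  have hle := Q.two_mul_b'_le_r
  have hodd : ¬ 2 ∣ Q.r := by
    simpa [h] using (Nat.Prime.coprime_iff_not_dvd Nat.prime_two).mp (h ▸ Q.coprime_b'_r)
  omega

end Basket

theorem plurigenus_two (K : ℚ) (B : Multiset Basket) :
    plurigenus K B 2 = K / 2 + (B.map (fun Q => Q.corr 2)).sum := by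
  unfold plurigenus
  norm_num
  ring

theorem stmt11 :
    ¬ ∃ (K : ℚ) (Q₁ Q₂ : Basket), 0 < K ∧ Q₁.r ≤ Q₂.r ∧
      Q₁.b' = 2 ∧ Q₂.b' = 1 ∧
      plurigenus K {Q₁, Q₂} 2 = 1 ∧ plurigenus K {Q₁, Q₂} 3 = 2 := by
  rintro ⟨K, Q₁, Q₂, hK, hr, hb₁, hb₂, hP₂, -⟩
  have hr₁ : (5 : ℚ) ≤ Q₁.r := by exact_mod_cast Q₁.five_le_r_of_b'_eq_two hb₁
  have hr₂ : (5 : ℚ) ≤ Q₂.r := by exact_mod_cast (Q₁.five_le_r_of_b'_eq_two hb₁).trans hr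
  have hK_eq : K / 2 = 2 / Q₁.r + 1 / (2 * Q₂.r) - 1 / 2 := by
    simp only [plurigenus_two, Multiset.insert_eq_cons, Multiset.map_cons,
      Multiset.map_singleton, Multiset.sum_cons, Multiset.sum_singleton, Basket.corr_two,
      hb₁, hb₂] at hP₂
    field_simp at hP₂ ⊢
    push_cast at hP₂
    linarith
  have h₁ : 2 / (Q₁.r : ℚ) ≤ 2 / 5 := by gcongr
  have h₂ : 1 / (2 * Q₂.r : ℚ) ≤ 1 / (2 * 5) := by gcongr
  linarith
end

section
/- Let K be a positive rational number and let B consist of exactly two baskets (b₁, 3), (b₂, 5), such that P_2(K, B) = 1 and P_3(K, B) = 2. Then K = 2/15, b₂ ∈ {2, 3}, P_4(K, B) = 3 and P_5(K, B) = 5. -/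
/-
A basket of index `r = 3` has the same corrections `l_Q(m)` for both choices of `b`. For `r = 5`
the sum `l_Q(3)` is `1` whatever `b` is, so `P_3` alone forces `K = 2/15`; then `P_2` forces
`l_Q(2) = 3/5`, which happens exactly for `b ∈ {2, 3}`, and these values of `K` and `b` determine
`P_4` and `P_5`.
-/

theorem plurigenus_pair (K : ℚ) (Q₁ Q₂ : Basket) (m : ℕ) :
    plurigenus K {Q₁, Q₂} m
      = 1 / 12 * m * (m - 1) * (2 * m - 1) * K + Q₁.corr m + Q₂.corr m := by
  simp only [plurigenus, Multiset.insert_eq_cons, Multiset.map_cons, Multiset.sum_cons,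
    Multiset.map_singleton, Multiset.sum_singleton]
  ring

namespace Basket

def corrTerm (Q : Basket) (j : ℕ) : ℚ :=
  ((Q.b * j % Q.r : ℕ) : ℚ) * ((Q.r : ℚ) - ((Q.b * j % Q.r : ℕ) : ℚ)) / (2 * (Q.r : ℚ))

theorem corr_one (Q : Basket) : Q.corr 1 = 0 := rfl

theorem corr_succ (Q : Basket) {m : ℕ} (hm : m ≠ 0) :
    Q.corr (m + 1) = Q.corr m + Q.corrTerm m := by
  rw [corr, corr, Nat.add_sub_cancel, ← Nat.sub_add_cancel (Nat.one_le_iff_ne_zero.2 hm),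
    Finset.sum_Icc_succ_top (by omega), Nat.add_sub_cancel]
  rfl

theorem corr_of_r_eq_three (Q : Basket) (hr : Q.r = 3) :
    Q.corr 2 = 1 / 3 ∧ Q.corr 3 = 2 / 3 ∧ Q.corr 4 = 2 / 3 ∧ Q.corr 5 = 1 := by
  cases Q with | mk b r hb hbr _ =>
  dsimp only at hr
  subst hr
  interval_cases b <;> norm_num [corr_succ, corr_one, corrTerm]

theorem corr_three_of_r_eq_five (Q : Basket) (hr : Q.r = 5) : Q.corr 3 = 1 := by
  cases Q with | mk b r hb hbr _ =>
  dsimp only at hr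
  subst hr
  interval_cases b <;> norm_num [corr_succ, corr_one, corrTerm]

theorem corr_two_eq_three_fifths_iff (Q : Basket) (hr : Q.r = 5) :
    Q.corr 2 = 3 / 5 ↔ Q.b = 2 ∨ Q.b = 3 := by
  cases Q with | mk b r hb hbr _ =>
  dsimp only at hr ⊢
  subst hr
  interval_cases b <;> norm_num [corr_succ, corr_one, corrTerm]

theorem corr_four_five_of_r_eq_five (Q : Basket) (hr : Q.r = 5) (hb : Q.b = 2 ∨ Q.b = 3) :
    Q.corr 4 = 7 / 5 ∧ Q.corr 5 = 2 := by
  cases Q with | mk b r _ _ _ =>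
  dsimp only at hr hb
  subst hr
  rcases hb with rfl | rfl <;> norm_num [corr_succ, corr_one, corrTerm]

end Basket

theorem stmt16_general (K : ℚ) (Q₁ Q₂ : Basket)
    (hr₁ : Q₁.r = 3) (hr₂ : Q₂.r = 5)
    (h2 : plurigenus K {Q₁, Q₂} 2 = 1)
    (h3 : plurigenus K {Q₁, Q₂} 3 = 2) :
    K = 2 / 15 ∧ (Q₂.b = 2 ∨ Q₂.b = 3) ∧
      plurigenus K {Q₁, Q₂} 4 = 3 ∧ plurigenus K {Q₁, Q₂} 5 = 5 := by
  obtain ⟨h₁2, h₁3, h₁4, h₁5⟩ := Q₁.corr_of_r_eq_three hr₁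
  simp only [plurigenus_pair] at h2 h3 ⊢
  have hK : K = 2 / 15 := by
    rw [h₁3, Q₂.corr_three_of_r_eq_five hr₂] at h3
    norm_num at h3
    linarith
  have hb : Q₂.b = 2 ∨ Q₂.b = 3 := by
    rw [← Q₂.corr_two_eq_three_fifths_iff hr₂]
    rw [h₁2, hK] at h2
    norm_num at h2
    linarith
  obtain ⟨h₂4, h₂5⟩ := Q₂.corr_four_five_of_r_eq_five hr₂ hb
  refine ⟨hK, hb, ?_, ?_⟩ <;> norm_num [hK, h₁4, h₁5, h₂4, h₂5]

theorem stmt16 (K : ℚ) (hK : 0 < K) (Q₁ Q₂ : Basket)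
    (hr₁ : Q₁.r = 3) (hr₂ : Q₂.r = 5)
    (h2 : plurigenus K {Q₁, Q₂} 2 = 1)
    (h3 : plurigenus K {Q₁, Q₂} 3 = 2) :
    K = 2 / 15 ∧ (Q₂.b = 2 ∨ Q₂.b = 3) ∧
      plurigenus K {Q₁, Q₂} 4 = 3 ∧ plurigenus K {Q₁, Q₂} 5 = 5 :=
  stmt16_general K Q₁ Q₂ hr₁ hr₂ h2 h3
end

section
/- Let K be a positive rational number and B a finite multiset of baskets such that P_2(K, B) = 1, P_3(K, B) = 2, P_4(K, B) = 3 and P_5(K, B) = 4. Then the multiset of pairs (r_Q, b'_Q) for Q ∈ B, together with K, is one of exactly four possibilities: {(2,1), (3,1), (4,1)} with K = 1/12; {(2,1), (3,1), (5,1)} with K = 1/30; {(2,1), (7,2)} with K = 1/14; {(4,1), (5,2)} with K = 1/20. Here for Q = (b, r) we write r_Q = r and b'_Q = b'. -/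
/-!
Since `m (m - 1) (2 m - 1) / 12 = ∑_{j < m} j² / 2`, the hypotheses say that
`j² K / 2 + T_j = 1` for `j = 1, …, 4`, where `T_j` is the sum over the baskets of the `j`-th
summand `x (r - x) / 2r` (`x = b j mod r`) of their correction terms. As `K > 0`, each basket has
its first four summands `< 1`, which forces `r ≤ 9` and leaves nine possible `(r, b')`. Each
basket contributes at least `1/4` to `T_1 < 1`, so there are at most three of them, and a finite
search over multisets of at most three of the nine types, with `K = 2 (1 - T_1)` eliminated,
leaves the four listed solutions.
-/

/-- The `j`-th summand of Reid's correction term of the basket `(b, r)` is `reidTerm (r, b) j`. -/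
def reidTerm (p : ℕ × ℕ) (j : ℕ) : ℚ :=
  ((p.2 * j % p.1 : ℕ) : ℚ) * ((p.1 : ℚ) - ((p.2 * j % p.1 : ℕ) : ℚ)) / (2 * (p.1 : ℚ))

def reidSum (M : Multiset (ℕ × ℕ)) (j : ℕ) : ℚ := (M.map (reidTerm · j)).sum

def Basket.index (Q : Basket) : ℕ × ℕ := (Q.r, Q.b')

theorem reidTerm_nonneg (p : ℕ × ℕ) (j : ℕ) : 0 ≤ reidTerm p j := by
  rcases Nat.eq_zero_or_pos p.1 with hr | hr
  · simp [reidTerm, hr]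
  have hx : ((p.2 * j % p.1 : ℕ) : ℚ) ≤ p.1 := by exact_mod_cast (Nat.mod_lt _ hr).le
  unfold reidTerm
  have : (0 : ℚ) ≤ p.1 - ((p.2 * j % p.1 : ℕ) : ℚ) := by linarith
  positivity

theorem reidTerm_le_reidSum {M : Multiset (ℕ × ℕ)} {p : ℕ × ℕ} (hp : p ∈ M) (j : ℕ) :
    reidTerm p j ≤ reidSum M j :=
  Multiset.single_le_sum (Multiset.forall_mem_map_iff.2 fun q _ => reidTerm_nonneg q j) _
    (Multiset.mem_map_of_mem _ hp)

/-- Since `(r - b) j + b j ≡ 0 (mod r)`, the residues `x` of `b j` and `y` of `(r - b) j`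
satisfy `x + y ∈ {0, r}`, and `x (r - x)` is invariant under `x ↦ r - x`. -/
theorem reidTerm_sub_right (r b j : ℕ) (hb : b ≤ r) :
    reidTerm (r, r - b) j = reidTerm (r, b) j := by
  rcases Nat.eq_zero_or_pos r with rfl | hr
  · simp [reidTerm]
  have hdvd : r ∣ (r - b) * j % r + b * j % r := by
    rw [Nat.dvd_iff_mod_eq_zero, ← Nat.add_mod, ← add_mul, Nat.sub_add_cancel hb,
      Nat.mul_mod_right]
  obtain ⟨k, hk⟩ := hdvd
  have hx := Nat.mod_lt (b * j) hr
  have hy := Nat.mod_lt ((r - b) * j) hr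
  have hk2 : k < 2 := by nlinarith
  simp only [reidTerm]
  interval_cases k
  · rw [show (r - b) * j % r = 0 by omega, show b * j % r = 0 by omega]
  · rw [show (r - b) * j % r = r - b * j % r by omega]
    push_cast [hx.le]
    ring

theorem Basket.reidTerm_index (Q : Basket) (j : ℕ) :
    reidTerm Q.index j = reidTerm (Q.r, Q.b) j := by
  unfold Basket.index Basket.b'
  split_ifs
  · rfl
  · exact reidTerm_sub_right _ _ _ Q.b_lt_r.le

theorem Basket.corr_succ_s18 (Q : Basket) (j : ℕ) :
    Q.corr (j + 1) = Q.corr j + reidTerm Q.index j := by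
  rw [Q.reidTerm_index]
  cases j with
  | zero => simp [Basket.corr, reidTerm]
  | succ n =>
    simp only [Basket.corr, Nat.add_sub_cancel]
    exact Finset.sum_Icc_succ_top (by omega) _

theorem plurigenus_one (K : ℚ) (B : Multiset Basket) : plurigenus K B 1 = 0 := by
  simp [plurigenus, Basket.corr]

theorem plurigenus_succ_sub (K : ℚ) (B : Multiset Basket) (j : ℕ) :
    plurigenus K B (j + 1) - plurigenus K B j =
      j ^ 2 * K / 2 + reidSum (B.map Basket.index) j := by
  simp only [plurigenus, reidSum, Multiset.map_map, Function.comp_def, Basket.corr_succ_s18,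
    Multiset.sum_map_add]
  push_cast
  ring

theorem reidTerm_lt_one_iff {r : ℕ} (hr : 0 < r) (b j : ℕ) :
    reidTerm (r, b) j < 1 ↔ b * j % r * (r - b * j % r) < 2 * r := by
  have hx : b * j % r < r := Nat.mod_lt _ hr
  rw [reidTerm, div_lt_one (by positivity), ← Nat.cast_lt (α := ℚ)]
  push_cast [hx.le]
  rfl

theorem quarter_le_reidTerm_one {r b : ℕ} (hb : 0 < b) (hbr : b < r) :
    1 / 4 ≤ reidTerm (r, b) 1 := by
  have hb' : (1 : ℚ) ≤ b := by exact_mod_cast hb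
  have hbr' : (b : ℚ) + 1 ≤ r := by exact_mod_cast hbr
  rw [reidTerm, mul_one, Nat.mod_eq_of_lt hbr, le_div_iff₀ (by linarith)]
  nlinarith

/-- For `r ≥ 10`, one of the first three multiples of `b` (with `2 b ≤ r`) has a residue `x`
with `3 ≤ x ≤ r - 3`, and then `x (r - x) ≥ 3 (r - 3) ≥ 2 r`. -/
theorem le_nine_of_residues {r b : ℕ} (hb : 0 < b) (h2b : 2 * b ≤ r)
    (h : ∀ j ∈ Finset.Icc 1 4, b * j % r * (r - b * j % r) < 2 * r) : r ≤ 9 := by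
  by_contra! hr
  rcases (by omega : b = 1 ∨ b = 2 ∨ 3 ≤ b) with rfl | rfl | hb3
  · have h3 := h 3 (by simp)
    rw [Nat.mod_eq_of_lt (by omega)] at h3
    omega
  · have h2 := h 2 (by simp)
    rw [Nat.mod_eq_of_lt (by omega)] at h2
    omega
  · have h1 := h 1 (by simp)
    rw [mul_one, Nat.mod_eq_of_lt (by omega)] at h1
    have : 3 * (r - 3) ≤ b * (r - b) := by
      obtain ⟨c, rfl⟩ := Nat.exists_eq_add_of_le hb3
      obtain ⟨d, rfl⟩ := Nat.exists_eq_add_of_le h2b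
      rw [show 2 * (3 + c) + d - (3 + c) = 3 + c + d by omega,
        show 2 * (3 + c) + d - 3 = 3 + 2 * c + d by omega]
      nlinarith
    omega

/-- The indices `(r, b')` of the baskets whose first four Reid summands are all `< 1`. -/
def smallIndices : List (ℕ × ℕ) :=
  [(2, 1), (3, 1), (4, 1), (5, 1), (5, 2), (6, 1), (7, 1), (7, 2), (7, 3)]

theorem mem_smallIndices {r b : ℕ} (hb : 0 < b) (h2b : 2 * b ≤ r) (hcop : Nat.gcd b r = 1)
    (h : ∀ j ∈ Finset.Icc 1 4, reidTerm (r, b) j < 1) : (r, b) ∈ smallIndices := by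
  have hres : ∀ j ∈ Finset.Icc 1 4, b * j % r * (r - b * j % r) < 2 * r := fun j hj =>
    (reidTerm_lt_one_iff (by omega) b j).1 (h j hj)
  have hr := le_nine_of_residues hb h2b hres
  have hb4 : b ≤ 4 := by omega
  clear h
  interval_cases r <;> interval_cases b <;> revert h2b hcop hres <;> decide

theorem Basket.index_mem_smallIndices (Q : Basket)
    (h : ∀ j ∈ Finset.Icc 1 4, reidTerm Q.index j < 1) : Q.index ∈ smallIndices := by
  have hb := Q.b_pos
  have hbr := Q.b_lt_r
  have hcop : Nat.gcd Q.b' Q.r = 1 := by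
    unfold Basket.b'
    split_ifs
    · exact Q.coprime
    · rw [Nat.gcd_self_sub_left hbr.le, Q.coprime]
  refine mem_smallIndices ?_ ?_ hcop h <;> unfold Basket.b' <;> split_ifs <;> omega

theorem Basket.quarter_le_reidTerm_index_one (Q : Basket) : 1 / 4 ≤ reidTerm Q.index 1 :=
  Q.reidTerm_index 1 ▸ quarter_le_reidTerm_one Q.b_pos Q.b_lt_r

theorem card_le_three_of_reidSum_lt_one {M : Multiset (ℕ × ℕ)}
    (hM : ∀ p ∈ M, 1 / 4 ≤ reidTerm p 1) (h : reidSum M 1 < 1) : M.card ≤ 3 := by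
  have := Multiset.card_nsmul_le_sum (Multiset.forall_mem_map_iff.2 hM)
  rw [Multiset.card_map, nsmul_eq_mul] at this
  have : (M.card : ℚ) < 4 := by unfold reidSum at h; linarith
  exact Nat.lt_succ_iff.1 (by exact_mod_cast this)

def IsReidSolution (M : Multiset (ℕ × ℕ)) (K : ℚ) : Prop :=
  (M = {(2, 1), (3, 1), (4, 1)} ∧ K = 1 / 12) ∨
    (M = {(2, 1), (3, 1), (5, 1)} ∧ K = 1 / 30) ∨
    (M = {(2, 1), (7, 2)} ∧ K = 1 / 14) ∨ (M = {(4, 1), (5, 2)} ∧ K = 1 / 20)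

instance (M : Multiset (ℕ × ℕ)) (K : ℚ) : Decidable (IsReidSolution M K) := by
  unfold IsReidSolution; infer_instance

/-- `1 - reidSum M j = j² K / 2` for `j = 1, …, 4` and some `K > 0`, with `K` eliminated. -/
def HasQuadraticDefects (M : Multiset (ℕ × ℕ)) : Prop :=
  0 < 1 - reidSum M 1 ∧ ∀ j ∈ [2, 3, 4], 1 - reidSum M j = (j : ℚ) ^ 2 * (1 - reidSum M 1)

instance (M : Multiset (ℕ × ℕ)) : Decidable (HasQuadraticDefects M) := by
  unfold HasQuadraticDefects; infer_instance

theorem hasQuadraticDefects_of_increments {M : Multiset (ℕ × ℕ)} {K : ℚ} (hK : 0 < K)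
    (h : ∀ j ∈ Finset.Icc (1 : ℕ) 4, (j : ℚ) ^ 2 * K / 2 + reidSum M j = 1) :
    HasQuadraticDefects M := by
  have h1 := h 1 (by simp)
  refine ⟨by push_cast at h1; linarith, ?_⟩
  simp only [List.mem_cons, List.not_mem_nil, or_false]
  rintro j (rfl | rfl | rfl) <;> push_cast at h1 ⊢ <;>
    linarith [h 2 (by simp), h 3 (by simp), h 4 (by simp)]

theorem isReidSolution_of_hasQuadraticDefects {M : Multiset (ℕ × ℕ)} (hcard : M.card ≤ 3)
    (hM : ∀ p ∈ M, p ∈ smallIndices) (h : HasQuadraticDefects M) :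
    IsReidSolution M (2 * (1 - reidSum M 1)) := by
  have h0 : HasQuadraticDefects 0 → IsReidSolution 0 (2 * (1 - reidSum 0 1)) := by
    decide +kernel
  have h1 : ∀ x ∈ smallIndices,
      HasQuadraticDefects {x} → IsReidSolution {x} (2 * (1 - reidSum {x} 1)) := by
    decide +kernel
  have h2 : ∀ x ∈ smallIndices, ∀ y ∈ smallIndices,
      HasQuadraticDefects {x, y} → IsReidSolution {x, y} (2 * (1 - reidSum {x, y} 1)) := by
    decide +kernel
  have h3 : ∀ x ∈ smallIndices, ∀ y ∈ smallIndices, ∀ z ∈ smallIndices,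
      HasQuadraticDefects {x, y, z} →
        IsReidSolution {x, y, z} (2 * (1 - reidSum {x, y, z} 1)) := by
    decide +kernel
  rcases (by omega : M.card = 0 ∨ M.card = 1 ∨ M.card = 2 ∨ M.card = 3) with hc | hc | hc | hc
  · rw [Multiset.card_eq_zero.1 hc] at h ⊢
    exact h0 h
  · obtain ⟨x, rfl⟩ := Multiset.card_eq_one.1 hc
    exact h1 x (hM x (by simp)) h
  · obtain ⟨x, y, rfl⟩ := Multiset.card_eq_two.1 hc
    exact h2 x (hM x (by simp)) y (hM y (by simp)) h
  · obtain ⟨x, y, z, rfl⟩ := Multiset.card_eq_three.1 hc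
    exact h3 x (hM x (by simp)) y (hM y (by simp)) z (hM z (by simp)) h

theorem stmt18 (K : ℚ) (hK : 0 < K) (B : Multiset Basket)
    (h2 : plurigenus K B 2 = 1) (h3 : plurigenus K B 3 = 2)
    (h4 : plurigenus K B 4 = 3) (h5 : plurigenus K B 5 = 4) :
    (B.map (fun Q => (Q.r, Q.b')) = ({(2, 1), (3, 1), (4, 1)} : Multiset (ℕ × ℕ)) ∧
        K = 1 / 12) ∨
    (B.map (fun Q => (Q.r, Q.b')) = ({(2, 1), (3, 1), (5, 1)} : Multiset (ℕ × ℕ)) ∧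
        K = 1 / 30) ∨
    (B.map (fun Q => (Q.r, Q.b')) = ({(2, 1), (7, 2)} : Multiset (ℕ × ℕ)) ∧
        K = 1 / 14) ∨
    (B.map (fun Q => (Q.r, Q.b')) = ({(4, 1), (5, 2)} : Multiset (ℕ × ℕ)) ∧
        K = 1 / 20) := by
  change IsReidSolution (B.map Basket.index) K
  set M := B.map Basket.index
  have hinc : ∀ j ∈ Finset.Icc (1 : ℕ) 4, (j : ℚ) ^ 2 * K / 2 + reidSum M j = 1 := by
    intro j hj
    rw [← plurigenus_succ_sub]
    obtain ⟨hj1, hj4⟩ := Finset.mem_Icc.1 hj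
    interval_cases j <;> norm_num [plurigenus_one, *]
  have hlt : ∀ j ∈ Finset.Icc 1 4, reidSum M j < 1 := fun j hj => by
    have : (0 : ℚ) < j := by exact_mod_cast (Finset.mem_Icc.1 hj).1
    linarith [hinc j hj, show 0 < (j : ℚ) ^ 2 * K / 2 by positivity]
  have hM : ∀ p ∈ M, p ∈ smallIndices := by
    simp only [M, Multiset.mem_map]
    rintro _ ⟨Q, hQ, rfl⟩
    exact Q.index_mem_smallIndices fun j hj =>
      (reidTerm_le_reidSum (Multiset.mem_map_of_mem _ hQ) j).trans_lt (hlt j hj)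
  have hcard : M.card ≤ 3 := card_le_three_of_reidSum_lt_one
    (Multiset.forall_mem_map_iff.2 fun Q _ => Q.quarter_le_reidTerm_index_one) (hlt 1 (by simp))
  have hKM : K = 2 * (1 - reidSum M 1) := by linarith [hinc 1 (by simp)]
  rw [hKM]
  exact isReidSolution_of_hasQuadraticDefects hcard hM (hasQuadraticDefects_of_increments hK hinc)
end
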